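/- arXiv:2308.06461 — 2 statements merged into one kernel-verified Lean document; each statement's English description precedes it below -/
import Mathlib

section
/- For every positive integer l, one has sqrt(2*pi*l) * (l/e)^l * exp(1/(12*l+1)) < l! < sqrt(2*pi*l) * (l/e)^l * exp(1/(12*l)). -/
/-!
Write `d n = log (stirlingSeq n) - log (stirlingSeq (n + 1))`. With `x = 1 / (2n + 1)²` one has
`d n = ∑_{k ≥ 1} x^k / (2k + 1)`. Bounding `1 / (2k + 1)` above by `1/3` and below by `3^(-k)`
sandwiches `d n` strictly between two geometric series, whose sums are
`1/(12n) - 1/(12(n+1))` and `1/(12n²+12n+2) > 1/(12n+1) - 1/(12(n+1)+1)`.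
Since `log (stirlingSeq n) → log √π` (Stirling's formula), summing these telescoping bounds
from `n` to infinity gives `1/(12n+1) < log (stirlingSeq n) - log √π < 1/(12n)`.
-/

open Real Filter Topology Stirling

section Telescoping

variable {α : Type*} [AddCommGroup α] [LinearOrder α] [IsOrderedAddMonoid α] [TopologicalSpace α]
  [OrderClosedTopology α] [IsTopologicalAddGroup α]

theorem sub_lt_sub_of_tendsto_of_sub_succ_lt {s g : ℕ → α} {a b : α}
    (hs : Tendsto s atTop (𝓝 a)) (hg : Tendsto g atTop (𝓝 b))
    (h : ∀ n, s n - s (n + 1) < g n - g (n + 1)) (n : ℕ) : s n - a < g n - b := by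
  have hmono : StrictMono fun n => s n - g n := strictMono_nat_of_lt_succ fun n => by
    rw [sub_lt_sub_iff, add_comm (s (n + 1))]
    exact sub_lt_sub_iff.mp (h n)
  have hle : s (n + 1) - g (n + 1) ≤ a - b := hmono.monotone.ge_of_tendsto (hs.sub hg) (n + 1)
  rw [sub_lt_sub_iff, add_comm (g n)]
  exact sub_lt_sub_iff.mp ((hmono n.lt_succ_self).trans_le hle)

end Telescoping

section OddPowerSeries

variable {x S : ℝ}

theorem hasSum_inv_odd_mul_pow_lt (hx0 : 0 < x) (hx1 : x < 1)
    (hS : HasSum (fun k : ℕ => 1 / (2 * ((k + 1 : ℕ) : ℝ) + 1) * x ^ (k + 1)) S) :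
    S < x / (3 * (1 - x)) := by
  have hgeo : HasSum (fun k : ℕ => x / 3 * x ^ k) (x / (3 * (1 - x))) := by
    have h := (hasSum_geometric_of_lt_one hx0.le hx1).mul_left (x / 3)
    rwa [← div_eq_mul_inv, div_div] at h
  refine hasSum_lt (i := 1) (fun k => ?_) ?_ hS hgeo
  · have hcoeff : 1 / (2 * ((k + 1 : ℕ) : ℝ) + 1) ≤ 1 / 3 := by
      gcongr
      push_cast
      linarith [k.cast_nonneg (α := ℝ)]
    calc 1 / (2 * ((k + 1 : ℕ) : ℝ) + 1) * x ^ (k + 1) ≤ 1 / 3 * x ^ (k + 1) := by gcongr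
      _ = x / 3 * x ^ k := by ring
  · norm_num
    nlinarith [pow_pos hx0 2]

theorem div_lt_hasSum_inv_odd_mul_pow (hx0 : 0 < x) (hx1 : x < 1)
    (hS : HasSum (fun k : ℕ => 1 / (2 * ((k + 1 : ℕ) : ℝ) + 1) * x ^ (k + 1)) S) :
    x / (3 - x) < S := by
  have hgeo : HasSum (fun k : ℕ => x / 3 * (x / 3) ^ k) (x / (3 - x)) := by
    have h := (hasSum_geometric_of_lt_one (r := x / 3) (by positivity) (by linarith)).mul_left
      (x / 3)
    rwa [← div_eq_mul_inv, div_div, mul_one_sub, mul_div_cancel₀ _ three_ne_zero] at h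
  refine hasSum_lt (i := 1) (fun k => ?_) ?_ hgeo hS
  · have hodd : 2 * ((k + 1 : ℕ) : ℝ) + 1 ≤ 3 ^ (k + 1) := by
      have := one_add_mul_le_pow (show (-2 : ℝ) ≤ 2 by norm_num) (k + 1)
      norm_num at this
      push_cast
      linarith
    calc x / 3 * (x / 3) ^ k = x ^ (k + 1) / 3 ^ (k + 1) := by rw [← pow_succ', div_pow]
      _ ≤ x ^ (k + 1) / (2 * ((k + 1 : ℕ) : ℝ) + 1) := by gcongr
      _ = _ := by ring
  · norm_num
    nlinarith [pow_pos hx0 2]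

theorem sq_one_div_two_mul_add_one_mem_Ioo {y : ℝ} (hy : 0 < y) :
    (1 / (2 * y + 1)) ^ 2 ∈ Set.Ioo 0 1 := by
  refine ⟨by positivity, pow_lt_one₀ (by positivity) ?_ two_ne_zero⟩
  rw [div_lt_one (by positivity)]
  linarith

end OddPowerSeries

namespace Stirling

theorem log_stirlingSeq_sdiff_lt {n : ℕ} (hn : n ≠ 0) :
    log (stirlingSeq n) - log (stirlingSeq (n + 1)) < 1 / (12 * n) - 1 / (12 * (n + 1)) := by
  obtain ⟨m, rfl⟩ := Nat.exists_eq_add_one_of_ne_zero hn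
  have hy : (0 : ℝ) < (m + 1 : ℕ) := by positivity
  obtain ⟨hx0, hx1⟩ := sq_one_div_two_mul_add_one_mem_Ioo hy
  have h := hasSum_inv_odd_mul_pow_lt hx0 hx1 (log_stirlingSeq_sdiff_hasSum m)
  generalize ((m + 1 : ℕ) : ℝ) = y at *
  have hx : (1 / (2 * y + 1)) ^ 2 / (3 * (1 - (1 / (2 * y + 1)) ^ 2))
      = 1 / (12 * y) - 1 / (12 * (y + 1)) := by
    rw [show 1 - (1 / (2 * y + 1)) ^ 2 = 4 * y * (y + 1) / (2 * y + 1) ^ 2 by field_simp; ring]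
    field_simp
    ring
  rwa [hx] at h

theorem lt_log_stirlingSeq_sdiff {n : ℕ} (hn : n ≠ 0) :
    1 / (12 * n + 1) - 1 / (12 * (n + 1) + 1)
      < log (stirlingSeq n) - log (stirlingSeq (n + 1)) := by
  obtain ⟨m, rfl⟩ := Nat.exists_eq_add_one_of_ne_zero hn
  have hy : (1 : ℝ) ≤ (m + 1 : ℕ) := by simp
  obtain ⟨hx0, hx1⟩ := sq_one_div_two_mul_add_one_mem_Ioo (zero_lt_one.trans_le hy)
  have h := div_lt_hasSum_inv_odd_mul_pow hx0 hx1 (log_stirlingSeq_sdiff_hasSum m)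
  generalize ((m + 1 : ℕ) : ℝ) = y at *
  have hx : (1 / (2 * y + 1)) ^ 2 / (3 - (1 / (2 * y + 1)) ^ 2)
      = 1 / (12 * y ^ 2 + 12 * y + 2) := by
    rw [show 3 - (1 / (2 * y + 1)) ^ 2 = (12 * y ^ 2 + 12 * y + 2) / (2 * y + 1) ^ 2 by
      field_simp; ring]
    field_simp
  rw [hx] at h
  refine lt_trans ?_ h
  rw [div_sub_div _ _ (by positivity) (by positivity),
    div_lt_div_iff₀ (by positivity) (by positivity)]
  nlinarith

theorem tendsto_log_stirlingSeq_succ :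
    Tendsto (fun n : ℕ => log (stirlingSeq (n + 1))) atTop (𝓝 (log √π)) :=
  (tendsto_stirlingSeq_sqrt_pi.log (by positivity)).comp (tendsto_add_atTop_nat 1)

theorem tendsto_twelve_mul_succ_atTop :
    Tendsto (fun n : ℕ => 12 * ((n : ℝ) + 1)) atTop atTop :=
  (tendsto_atTop_add_const_right _ 1 tendsto_natCast_atTop_atTop).const_mul_atTop (by norm_num)

theorem stirlingSeq_lt_sqrt_pi_mul_exp {n : ℕ} (hn : n ≠ 0) :
    stirlingSeq n < √π * exp (1 / (12 * n)) := by
  obtain ⟨m, rfl⟩ := Nat.exists_eq_add_one_of_ne_zero hn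
  have hπ : 0 < √π := by positivity
  have h := sub_lt_sub_of_tendsto_of_sub_succ_lt tendsto_log_stirlingSeq_succ
    (tendsto_const_nhds.div_atTop tendsto_twelve_mul_succ_atTop)
    (fun k => by exact_mod_cast log_stirlingSeq_sdiff_lt k.succ_ne_zero) m
  rw [sub_zero] at h
  rw [← div_lt_iff₀' (by positivity), ← log_lt_iff_lt_exp (div_pos (stirlingSeq'_pos m) hπ),
    log_div (stirlingSeq'_pos m).ne' hπ.ne']
  exact_mod_cast h

theorem sqrt_pi_mul_exp_lt_stirlingSeq {n : ℕ} (hn : n ≠ 0) :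
    √π * exp (1 / (12 * n + 1)) < stirlingSeq n := by
  obtain ⟨m, rfl⟩ := Nat.exists_eq_add_one_of_ne_zero hn
  have hπ : 0 < √π := by positivity
  have h := sub_lt_sub_of_tendsto_of_sub_succ_lt
    (tendsto_const_nhds.div_atTop <|
      tendsto_atTop_add_const_right _ 1 tendsto_twelve_mul_succ_atTop)
    tendsto_log_stirlingSeq_succ
    (fun k => by exact_mod_cast lt_log_stirlingSeq_sdiff k.succ_ne_zero) m
  rw [sub_zero] at h
  rw [← lt_div_iff₀' hπ, ← lt_log_iff_exp_lt (div_pos (stirlingSeq'_pos m) hπ),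
    log_div (stirlingSeq'_pos m).ne' hπ.ne']
  exact_mod_cast h

end Stirling

theorem robbins_stirling (l : ℕ) (hl : 0 < l) :
    Real.sqrt (2 * π * l) * ((l : ℝ) / Real.exp 1) ^ l * Real.exp (1 / (12 * l + 1))
      < (Nat.factorial l : ℝ) ∧
    (Nat.factorial l : ℝ)
      < Real.sqrt (2 * π * l) * ((l : ℝ) / Real.exp 1) ^ l * Real.exp (1 / (12 * l)) := by
  have hD : 0 < √(2 * l : ℝ) * (l / exp 1) ^ l := by positivity
  have hfactorial : (l.factorial : ℝ) = stirlingSeq l * (√(2 * l : ℝ) * (l / exp 1) ^ l) :=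
    (div_mul_cancel₀ _ hD.ne').symm
  have hsqrt : √(2 * π * l) * (l / exp 1) ^ l = √π * (√(2 * l : ℝ) * (l / exp 1) ^ l) := by
    rw [show 2 * π * l = π * (2 * l) by ring, sqrt_mul pi_pos.le, mul_assoc]
  rw [hsqrt, hfactorial]
  constructor
  · rw [mul_right_comm]
    exact mul_lt_mul_of_pos_right (sqrt_pi_mul_exp_lt_stirlingSeq hl.ne') hD
  · rw [mul_right_comm]
    exact mul_lt_mul_of_pos_right (stirlingSeq_lt_sqrt_pi_mul_exp hl.ne') hD
end

section
/- Let t and s be real numbers with 0 <= s*t < 1/6. Then |integral over R of exp(-y^2/2) * exp(i*(-t*y + s*y^3)) dy| <= sqrt(2*pi) * exp(-(t^2 - s*t^3)/2) * (1 - 6*s*t)^{-1/2}. -/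
/-!
The integrand `exp (-z ^ 2 / 2 + i (-t z + s z ^ 3))` is entire, so by Cauchy's theorem its
integral over `ℝ` equals its integral over the line `ℝ - i t`, provided it decays uniformly on
the strip in between. When `0 ≤ s t`, its modulus on that strip is at most
`exp (-(1 - 6 s t) x ^ 2 / 2)`, and on the line `ℝ - i t` it equals
`exp (-t ^ 2 / 2 - s t ^ 3) exp (-(1 - 6 s t) x ^ 2 / 2)`; the Gaussian integral then gives
the bound.
-/

open Real Complex MeasureTheory Set Filter Topology

section ContourShift

variable {E : Type*} [NormedAddCommGroup E] {f : ℂ → E}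

theorem intervalIntegral_add_mul_I_eq [NormedSpace ℂ E] (hf : Differentiable ℂ f) (c T : ℝ) :
    ∫ x : ℝ in -T..T, f (x + c * I) =
      (∫ x : ℝ in -T..T, f x) + I • (∫ y : ℝ in 0..c, f (T + y * I)) -
        I • ∫ y : ℝ in 0..c, f (-T + y * I) := by
  have h := integral_boundary_rect_eq_zero_of_differentiableOn f (-T) (T + c * I)
    hf.differentiableOn
  simp only [neg_re, neg_im, ofReal_re, ofReal_im, add_re, add_im, mul_re, mul_im, I_re, I_im,
    mul_zero, mul_one, sub_zero, add_zero, zero_add, neg_zero, ofReal_zero, zero_mul] at h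
  push_cast at h
  linear_combination (norm := module) -h

variable {c : ℝ} {g : ℝ → ℝ}

theorem integrable_add_mul_I_of_norm_le (hf : Continuous f) (hg : Integrable g)
    (hfg : ∀ x : ℝ, ∀ y ∈ uIcc 0 c, ‖f (x + y * I)‖ ≤ g x) {y : ℝ} (hy : y ∈ uIcc 0 c) :
    Integrable fun x : ℝ => f (x + y * I) :=
  hg.mono' (by fun_prop) (.of_forall fun x => hfg x y hy)

theorem tendsto_integral_vertical_segment_cocompact [NormedSpace ℂ E]
    (hg : Tendsto g (cocompact ℝ) (𝓝 0))
    (hfg : ∀ x : ℝ, ∀ y ∈ uIcc 0 c, ‖f (x + y * I)‖ ≤ g x) :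
    Tendsto (fun x : ℝ => ∫ y : ℝ in 0..c, f (x + y * I)) (cocompact ℝ) (𝓝 0) := by
  refine squeeze_zero_norm (fun x => ?_) (by simpa using hg.mul_const |c|)
  simpa using intervalIntegral.norm_integral_le_of_norm_le_const fun y hy =>
    hfg x y (uIoc_subset_uIcc hy)

theorem integral_add_mul_I_eq_integral [NormedSpace ℂ E] [CompleteSpace E]
    (hf : Differentiable ℂ f) (hg_int : Integrable g) (hg : Tendsto g (cocompact ℝ) (𝓝 0))
    (hfg : ∀ x : ℝ, ∀ y ∈ uIcc 0 c, ‖f (x + y * I)‖ ≤ g x) :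
    ∫ x : ℝ, f (x + c * I) = ∫ x : ℝ, f x := by
  have hf₀ : Integrable fun x : ℝ => f x := by
    simpa using integrable_add_mul_I_of_norm_le hf.continuous hg_int hfg left_mem_uIcc
  have hfc := integrable_add_mul_I_of_norm_le hf.continuous hg_int hfg right_mem_uIcc
  have hvert := tendsto_integral_vertical_segment_cocompact hg hfg
  have hsides : Tendsto (fun T : ℝ => I • (∫ y : ℝ in 0..c, f (T + y * I)) -
      I • ∫ y : ℝ in 0..c, f (-T + y * I)) atTop (𝓝 0) := by
    have hright := hvert.mono_left atTop_le_cocompact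
    have hleft := (hvert.mono_left atBot_le_cocompact).comp tendsto_neg_atTop_atBot
    simpa using (hright.const_smul I).sub (hleft.const_smul I)
  refine tendsto_nhds_unique
    (intervalIntegral_tendsto_integral hfc tendsto_neg_atTop_atBot tendsto_id) ?_
  simp_rw [id, intervalIntegral_add_mul_I_eq hf, add_sub_assoc]
  simpa using
    (intervalIntegral_tendsto_integral hf₀ tendsto_neg_atTop_atBot tendsto_id).add hsides

end ContourShift

theorem tendsto_exp_neg_mul_sq_cocompact {a : ℝ} (ha : 0 < a) :
    Tendsto (fun x : ℝ => Real.exp (-a * x ^ 2)) (cocompact ℝ) (𝓝 0) := by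
  simpa using tendsto_rpow_abs_mul_exp_neg_mul_sq_cocompact ha 0

theorem sqrt_pi_div_half_eq {a : ℝ} (ha : 0 < a) :
    √(π / (a / 2)) = √(2 * π) * a ^ (-(1 : ℝ) / 2) := by
  rw [div_div_eq_mul_div, Real.sqrt_div' _ ha.le, neg_div, Real.rpow_neg ha.le,
    ← Real.sqrt_eq_rpow, div_eq_mul_inv, mul_comm π]

noncomputable def cubicPhaseGaussian (t s : ℝ) (z : ℂ) : ℂ :=
  cexp (-z ^ 2 / 2) * cexp (I * (-t * z + s * z ^ 3))

theorem differentiable_cubicPhaseGaussian (t s : ℝ) :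
    Differentiable ℂ (cubicPhaseGaussian t s) := by
  unfold cubicPhaseGaussian
  fun_prop

theorem norm_cubicPhaseGaussian (t s x y : ℝ) :
    ‖cubicPhaseGaussian t s (x + y * I)‖ =
      Real.exp (-(x ^ 2 - y ^ 2) / 2 + t * y - 3 * s * x ^ 2 * y + s * y ^ 3) := by
  rw [cubicPhaseGaussian, norm_mul, norm_exp, norm_exp, ← Real.exp_add]
  congr 1
  simp only [pow_succ, pow_zero, one_mul, div_ofNat_re, neg_re, mul_re, add_re, ofReal_re, I_re,
    mul_zero, ofReal_im, I_im, mul_one, sub_self, add_zero, add_im, mul_im, zero_add, neg_sub,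
    neg_mul, zero_mul, sub_zero, neg_im, zero_sub, neg_add_rev, neg_neg]
  ring

theorem norm_cubicPhaseGaussian_sub_mul_I (t s x : ℝ) :
    ‖cubicPhaseGaussian t s (x + (-t : ℝ) * I)‖ =
      Real.exp (-t ^ 2 / 2 - s * t ^ 3) * Real.exp (-((1 - 6 * s * t) / 2) * x ^ 2) := by
  rw [norm_cubicPhaseGaussian, ← Real.exp_add]
  ring_nf

theorem norm_cubicPhaseGaussian_le {t s : ℝ} (hst : 0 ≤ s * t) (x : ℝ) {y : ℝ}
    (hy : y ∈ uIcc 0 (-t)) :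
    ‖cubicPhaseGaussian t s (x + y * I)‖ ≤ Real.exp (-((1 - 6 * s * t) / 2) * x ^ 2) := by
  have hyt : y * (y + t) ≤ 0 := by
    rcases mem_uIcc.mp hy with h | h <;> nlinarith
  have hsy : s * y ≤ 0 ∧ 0 ≤ s * (y + t) := by
    rcases mem_uIcc.mp hy with h | h <;> rcases le_total 0 s with hs | hs <;>
      constructor <;> nlinarith
  rw [norm_cubicPhaseGaussian, Real.exp_le_exp]
  nlinarith [mul_nonpos_of_nonpos_of_nonneg hsy.1 (sq_nonneg y), sq_nonneg y,
    mul_nonneg hsy.2 (sq_nonneg x)]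

theorem cubic_phase_gaussian_integral_bound (t s : ℝ) (hst : 0 ≤ s * t) (hst' : s * t < 1/6) :
    ‖(∫ y : ℝ,
        Complex.exp (-((y : ℂ) ^ 2) / 2) *
          Complex.exp (Complex.I * (-(t : ℂ) * y + (s : ℂ) * (y : ℂ) ^ 3)))‖
      ≤ Real.sqrt (2 * π) * Real.exp (-(t ^ 2 - s * t ^ 3) / 2) *
          (1 - 6 * s * t) ^ (-(1 : ℝ) / 2) := by
  have h6st : 0 < 1 - 6 * s * t := by linarith
  have hb : 0 < (1 - 6 * s * t) / 2 := by positivity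
  have hshift := integral_add_mul_I_eq_integral (differentiable_cubicPhaseGaussian t s)
    (integrable_exp_neg_mul_sq hb) (tendsto_exp_neg_mul_sq_cocompact hb)
    (norm_cubicPhaseGaussian_le hst)
  have hexp : Real.exp (-t ^ 2 / 2 - s * t ^ 3) ≤ Real.exp (-(t ^ 2 - s * t ^ 3) / 2) := by
    rw [Real.exp_le_exp]
    nlinarith [mul_nonneg hst (sq_nonneg t)]
  change ‖∫ y : ℝ, cubicPhaseGaussian t s y‖ ≤ _
  calc ‖∫ y : ℝ, cubicPhaseGaussian t s y‖
      = ‖∫ x : ℝ, cubicPhaseGaussian t s (x + (-t : ℝ) * I)‖ := by rw [hshift]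
    _ ≤ ∫ x : ℝ, ‖cubicPhaseGaussian t s (x + (-t : ℝ) * I)‖ :=
      norm_integral_le_integral_norm _
    _ = Real.exp (-t ^ 2 / 2 - s * t ^ 3) * √(π / ((1 - 6 * s * t) / 2)) := by
      simp_rw [norm_cubicPhaseGaussian_sub_mul_I, integral_const_mul, integral_gaussian]
    _ ≤ Real.exp (-(t ^ 2 - s * t ^ 3) / 2) * √(π / ((1 - 6 * s * t) / 2)) := by gcongr
    _ = _ := by rw [sqrt_pi_div_half_eq h6st]; ring
end
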